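/- Let G = (V,E) be a connected, locally finite simple graph, x ∈ V a fixed base vertex, u : V → ℝ harmonic, and k ≥ 1 an integer. Suppose there is an integer d ≥ 1 such that d_in(v) = d = d_out(v) for every vertex v with k − 1 ≤ d(x,v) ≤ k + 1. Then ∑_{y : d(x,y)=k+1} u(y)² − 2·∑_{y : d(x,y)=k} u(y)² + ∑_{y : d(x,y)=k−1} u(y)² ≥ 0. -/

import Mathlib

/-- In-degree of `v` relative to base vertex `x`: the number of neighbors of `v`
whose distance to `x` is one less than that of `v`. -/
noncomputable def din {V : Type*} (G : SimpleGraph V) (x v : V) : ℕ :=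
  {w | G.Adj v w ∧ G.dist x w = G.dist x v - 1}.ncard

/-- Out-degree of `v` relative to base vertex `x`: the number of neighbors of `v`
whose distance to `x` is one more than that of `v`. -/
noncomputable def dout {V : Type*} (G : SimpleGraph V) (x v : V) : ℕ :=
  {w | G.Adj v w ∧ G.dist x w = G.dist x v + 1}.ncard

/-- `u` is harmonic: at every vertex the sum of differences over neighbors vanishes. -/
def GraphHarmonic {V : Type*} (G : SimpleGraph V) (u : V → ℝ) : Prop :=
  ∀ v : V, ∑ᶠ y ∈ G.neighborSet v, (u y - u v) = 0

/-!
Write `S j` for the sphere of radius `j` about `x` and `Q j = ∑_{S j} u²`. Multiplying the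
harmonic equation at each `v ∈ S k` by `u v` and summing gives `A₋ + A₀ + A₊ = 2d·Q k + C`, where
`A₋`, `A₀`, `A₊` sum `u v · u w` over the edges from `S k` to `S (k-1)`, `S k`, `S (k+1)`, and
`C = ∑_{v ∈ S k} e(v) u(v)²` with `e(v)` the number of neighbours of `v` inside `S k`.
By `2ab ≤ a² + b²` and double counting, `A₀ ≤ C`, and since the bipartite graphs between `S k`
and `S (k±1)` are `d`-regular on both sides, `2A_± ≤ d (Q k + Q (k±1))`. Hence
`2d·Q k ≤ d (Q (k-1) + Q (k+1))`, and `d ≥ 1`.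
-/

open Finset

section DoubleCounting

variable {α R : Type*} [CommRing R] [LinearOrder R] [IsStrictOrderedRing R]
  (r : α → α → Prop) [DecidableRel r] (f : α → R)

theorem Finset.two_mul_sum_sum_filter_mul_le (s t : Finset α) :
    2 * ∑ a ∈ s, ∑ b ∈ t with r a b, f a * f b ≤
      ∑ a ∈ s, #{b ∈ t | r a b} * f a ^ 2 + ∑ b ∈ t, #{a ∈ s | r a b} * f b ^ 2 := by
  calc 2 * ∑ a ∈ s, ∑ b ∈ t with r a b, f a * f b
      = ∑ a ∈ s, ∑ b ∈ t with r a b, 2 * f a * f b := by simp only [mul_sum, mul_assoc]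
    _ ≤ ∑ a ∈ s, ∑ b ∈ t with r a b, (f a ^ 2 + f b ^ 2) :=
        sum_le_sum fun a _ => sum_le_sum fun b _ => two_mul_le_add_sq (f a) (f b)
    _ = ∑ a ∈ s, ∑ b ∈ t with r a b, f a ^ 2 + ∑ a ∈ s, ∑ b ∈ t with r a b, f b ^ 2 := by
        simp only [sum_add_distrib]
    _ = _ := by
        rw [show ∑ a ∈ s, ∑ b ∈ t with r a b, f b ^ 2 = ∑ b ∈ t, ∑ a ∈ s with r a b, f b ^ 2 from
          sum_sum_bipartiteAbove_eq_sum_sum_bipartiteBelow r (fun _ b => f b ^ 2)]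
        simp only [sum_const, nsmul_eq_mul]

theorem Finset.two_mul_sum_sum_filter_mul_le_of_biregular {s t : Finset α} {m n : ℕ}
    (hs : ∀ a ∈ s, #{b ∈ t | r a b} = m) (ht : ∀ b ∈ t, #{a ∈ s | r a b} = n) :
    2 * ∑ a ∈ s, ∑ b ∈ t with r a b, f a * f b ≤ m * ∑ a ∈ s, f a ^ 2 + n * ∑ b ∈ t, f b ^ 2 := by
  convert two_mul_sum_sum_filter_mul_le r f s t using 2 <;> rw [mul_sum] <;>
    refine sum_congr rfl fun a ha => ?_
  · rw [hs a ha]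
  · rw [ht a ha]

theorem Finset.sum_sum_filter_mul_le_of_symm (hr : ∀ a b, r a b → r b a) (s : Finset α) :
    ∑ a ∈ s, ∑ b ∈ s with r a b, f a * f b ≤ ∑ a ∈ s, #{b ∈ s | r a b} * f a ^ 2 := by
  have h := two_mul_sum_sum_filter_mul_le r f s s
  have hsymm : ∀ b, ({a ∈ s | r a b} : Finset α) = {a ∈ s | r b a} := fun b =>
    filter_congr fun a _ => ⟨hr a b, hr b a⟩
  simp only [hsymm] at h
  linarith

end DoubleCounting

namespace SimpleGraph

variable {V : Type*} {G : SimpleGraph V} {x v : V} {k : ℕ}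

lemma exists_adj_dist_eq_of_dist_eq_succ {y : V} {n : ℕ} (h : G.dist x y = n + 1) :
    ∃ w, G.Adj w y ∧ G.dist x w = n := by
  have hreach : G.Reachable y x := (Reachable.of_dist_ne_zero (by omega : G.dist x y ≠ 0)).symm
  obtain ⟨p, hp⟩ := hreach.exists_walk_length_eq_dist
  rw [dist_comm, h] at hp
  cases p with
  | nil => simp at hp
  | @cons _ w _ hadj q =>
    rw [Walk.length_cons] at hp
    have hq : G.dist x w ≤ n := dist_comm.trans_le ((dist_le q).trans_eq (by omega))
    refine ⟨w, hadj.symm, ?_⟩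
    rcases hadj.diff_dist_adj (u := x) with h' | h' | h' <;> omega

variable [G.LocallyFinite] (hG : G.Connected)

include hG in
lemma Connected.finite_setOf_dist_eq (x : V) (n : ℕ) : {y | G.dist x y = n}.Finite := by
  induction n with
  | zero => exact (Set.finite_singleton x).subset fun _ hy => (hG.dist_eq_zero_iff.mp hy).symm
  | succ n ih =>
    refine (ih.biUnion fun w _ => (G.neighborSet w).toFinite).subset fun _ hy => ?_
    obtain ⟨w, hw, hxw⟩ := exists_adj_dist_eq_of_dist_eq_succ hy
    exact Set.mem_biUnion hxw hw

noncomputable def Connected.sphere (x : V) (n : ℕ) : Finset V :=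
  (hG.finite_setOf_dist_eq x n).toFinset

@[simp]
lemma Connected.mem_sphere {n : ℕ} : v ∈ hG.sphere x n ↔ G.dist x v = n :=
  Set.Finite.mem_toFinset _

lemma Connected.disjoint_sphere {m n : ℕ} (h : m ≠ n) :
    Disjoint (hG.sphere x m) (hG.sphere x n) :=
  Finset.disjoint_left.mpr fun _ hm hn =>
    h (((hG.mem_sphere).1 hm).symm.trans ((hG.mem_sphere).1 hn))

variable [DecidableRel G.Adj]

lemma Connected.card_filter_adj_sphere_sub_one {n : ℕ} (hv : v ∈ hG.sphere x n) :
    #{w ∈ hG.sphere x (n - 1) | G.Adj v w} = din G x v := by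
  rw [din, ← Set.ncard_coe_finset, (hG.mem_sphere).1 hv]
  congr 1
  ext w
  simp [and_comm]

lemma Connected.card_filter_adj_sphere_add_one {n : ℕ} (hv : v ∈ hG.sphere x n) :
    #{w ∈ hG.sphere x (n + 1) | G.Adj v w} = dout G x v := by
  rw [dout, ← Set.ncard_coe_finset, (hG.mem_sphere).1 hv]
  congr 1
  ext w
  simp [and_comm]

variable [DecidableEq V]

lemma Connected.sum_neighborFinset_eq_sum_spheres {M : Type*} [AddCommMonoid M]
    (hv : G.dist x v = k) (hk : 1 ≤ k) (f : V → M) :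
    ∑ w ∈ G.neighborFinset v, f w =
      ∑ w ∈ hG.sphere x (k - 1) with G.Adj v w, f w + ∑ w ∈ hG.sphere x k with G.Adj v w, f w +
        ∑ w ∈ hG.sphere x (k + 1) with G.Adj v w, f w := by
  have hN : G.neighborFinset v =
      {w ∈ hG.sphere x (k - 1) ∪ hG.sphere x k ∪ hG.sphere x (k + 1) | G.Adj v w} := by
    ext w
    simp only [mem_neighborFinset, mem_filter, mem_union, hG.mem_sphere, iff_and_self]
    intro hadj
    rcases hadj.diff_dist_adj (u := x) with h | h | h <;> omega
  have h01 := hG.disjoint_sphere (x := x) (m := k - 1) (n := k) (by omega)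
  have h02 := hG.disjoint_sphere (x := x) (m := k - 1) (n := k + 1) (by omega)
  have h12 := hG.disjoint_sphere (x := x) (m := k) (n := k + 1) (by omega)
  rw [hN, filter_union, filter_union, sum_union, sum_union]
  · exact disjoint_filter_filter h01
  · exact disjoint_union_left.mpr ⟨disjoint_filter_filter h02, disjoint_filter_filter h12⟩

lemma Connected.degree_eq_din_add_add_dout (hv : G.dist x v = k) (hk : 1 ≤ k) :
    G.degree v = din G x v + #{w ∈ hG.sphere x k | G.Adj v w} + dout G x v := by
  rw [← card_neighborFinset_eq_degree, card_eq_sum_ones,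
    hG.sum_neighborFinset_eq_sum_spheres hv hk, ← card_eq_sum_ones, ← card_eq_sum_ones,
    ← card_eq_sum_ones, hG.card_filter_adj_sphere_sub_one ((hG.mem_sphere).2 hv),
    hG.card_filter_adj_sphere_add_one ((hG.mem_sphere).2 hv)]

end SimpleGraph

namespace GraphHarmonic

variable {V : Type*} {G : SimpleGraph V} [G.LocallyFinite] {u : V → ℝ}

lemma sum_neighborFinset (hu : GraphHarmonic G u) (v : V) :
    ∑ w ∈ G.neighborFinset v, u w = G.degree v * u v := by
  have h := hu v
  rw [← G.coe_neighborFinset, finsum_mem_coe_finset, sum_sub_distrib, sum_const,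
    G.card_neighborFinset_eq_degree, nsmul_eq_mul, sub_eq_zero] at h
  exact h

lemma sum_sphere_mul_sum_adj_eq [DecidableRel G.Adj] [DecidableEq V]
    (hu : GraphHarmonic G u) (hG : G.Connected) {x : V} {k d : ℕ} (hk : 1 ≤ k)
    (hreg : ∀ v ∈ hG.sphere x k, din G x v = d ∧ dout G x v = d) :
    ∑ v ∈ hG.sphere x k, ∑ w ∈ hG.sphere x (k - 1) with G.Adj v w, u v * u w +
        ∑ v ∈ hG.sphere x k, ∑ w ∈ hG.sphere x k with G.Adj v w, u v * u w +
        ∑ v ∈ hG.sphere x k, ∑ w ∈ hG.sphere x (k + 1) with G.Adj v w, u v * u w =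
      2 * d * ∑ v ∈ hG.sphere x k, u v ^ 2 +
        ∑ v ∈ hG.sphere x k, #{w ∈ hG.sphere x k | G.Adj v w} * u v ^ 2 := by
  rw [mul_sum, ← sum_add_distrib, ← sum_add_distrib, ← sum_add_distrib]
  refine sum_congr rfl fun v hv => ?_
  have hvk := (hG.mem_sphere).1 hv
  obtain ⟨hin, hout⟩ := hreg v hv
  have hharm := hu.sum_neighborFinset v
  rw [hG.sum_neighborFinset_eq_sum_spheres hvk hk, hG.degree_eq_din_add_add_dout hvk hk, hin,
    hout] at hharm
  simp only [← mul_sum, ← mul_add, hharm]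
  push_cast
  ring

lemma two_mul_sum_sphere_sq_le [DecidableRel G.Adj] [DecidableEq V]
    (hu : GraphHarmonic G u) (hG : G.Connected) {x : V} {k d : ℕ} (hk : 1 ≤ k) (hd : 1 ≤ d)
    (hreg : ∀ v : V, k - 1 ≤ G.dist x v → G.dist x v ≤ k + 1 →
      din G x v = d ∧ dout G x v = d) :
    2 * ∑ v ∈ hG.sphere x k, u v ^ 2 ≤
      ∑ v ∈ hG.sphere x (k - 1), u v ^ 2 + ∑ v ∈ hG.sphere x (k + 1), u v ^ 2 := by
  set S := hG.sphere x
  have hregS : ∀ n, k - 1 ≤ n → n ≤ k + 1 → ∀ v ∈ S n, din G x v = d ∧ dout G x v = d :=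
    fun n h₁ h₂ v hv => by
      rw [hG.mem_sphere] at hv
      exact hreg v (by omega) (by omega)
  have hflip : ∀ (s : Finset V) w, ({v ∈ s | G.Adj v w} : Finset V) = {v ∈ s | G.Adj w v} :=
    fun s w => filter_congr fun v _ => G.adj_comm v w
  have hdown : ∀ v ∈ S k, #{w ∈ S (k - 1) | G.Adj v w} = d := fun v hv =>
    (hG.card_filter_adj_sphere_sub_one hv).trans (hregS k (by omega) (by omega) v hv).1
  have hup : ∀ v ∈ S k, #{w ∈ S (k + 1) | G.Adj v w} = d := fun v hv =>
    (hG.card_filter_adj_sphere_add_one hv).trans (hregS k (by omega) (by omega) v hv).2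
  have hdown' : ∀ w ∈ S (k - 1), #{v ∈ S k | G.Adj v w} = d := fun w hw => by
    rw [hflip, show S k = S (k - 1 + 1) by rw [Nat.sub_add_cancel hk],
      hG.card_filter_adj_sphere_add_one hw, (hregS (k - 1) le_rfl (by omega) w hw).2]
  have hup' : ∀ w ∈ S (k + 1), #{v ∈ S k | G.Adj v w} = d := fun w hw => by
    rw [hflip, show S k = S (k + 1 - 1) by rw [Nat.add_sub_cancel],
      hG.card_filter_adj_sphere_sub_one hw, (hregS (k + 1) (by omega) le_rfl w hw).1]
  have hlower := two_mul_sum_sum_filter_mul_le_of_biregular G.Adj u hdown hdown'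
  have hupper := two_mul_sum_sum_filter_mul_le_of_biregular G.Adj u hup hup'
  have hwithin := sum_sum_filter_mul_le_of_symm G.Adj u (fun _ _ h => h.symm) (S k)
  have hharm := hu.sum_sphere_mul_sum_adj_eq hG hk (hregS k (by omega) (by omega))
  have hdpos : (0 : ℝ) < d := by exact_mod_cast hd
  refine le_of_mul_le_mul_left ?_ hdpos
  linarith

end GraphHarmonic

/-- if `d_in(v) = d = d_out(v)` for all vertices `v` with
`k−1 ≤ d(x,v) ≤ k+1` (with `k ≥ 1`, `d ≥ 1`), then for harmonic `u` the sphere energies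
are convex: `∑_{d(x,y)=k+1} u(y)² − 2∑_{d(x,y)=k} u(y)² + ∑_{d(x,y)=k−1} u(y)² ≥ 0`. -/
theorem sphere_energy_convex {V : Type*} (G : SimpleGraph V) (hconn : G.Connected)
    (hlf : ∀ v : V, (G.neighborSet v).Finite) (x : V) (u : V → ℝ)
    (hu : GraphHarmonic G u) (k : ℕ) (hk : 1 ≤ k) (d : ℕ) (hd : 1 ≤ d)
    (hreg : ∀ v : V, k - 1 ≤ G.dist x v → G.dist x v ≤ k + 1 →
      din G x v = d ∧ dout G x v = d) :
    (∑ᶠ y ∈ {y | G.dist x y = k + 1}, u y ^ 2) -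
        2 * (∑ᶠ y ∈ {y | G.dist x y = k}, u y ^ 2) +
        (∑ᶠ y ∈ {y | G.dist x y = k - 1}, u y ^ 2) ≥ 0 := by
  classical
  let : G.LocallyFinite := fun v => (hlf v).fintype
  have hsphere : ∀ n, ∑ᶠ y ∈ {y | G.dist x y = n}, u y ^ 2 = ∑ y ∈ hconn.sphere x n, u y ^ 2 :=
    fun n => finsum_mem_eq_finite_toFinset_sum _ _
  rw [hsphere, hsphere, hsphere]
  linarith [hu.two_mul_sum_sphere_sq_le hconn hk hd hreg]
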